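/- arXiv:2508.11151 — 6 statements merged into one kernel-verified Lean document; each statement's English description precedes it below -/
import Mathlib

section
/- In the four-agent example economy with preference profile ≻_I, the strong core is empty: there is no individually rational allocation that is not weakly blocked by some non-singleton coalition. -/
open Finset

open Classical in
/-- The total amount that assignment `x` allocates to objects weakly preferred
(under strict preference `pr`) to object `o`. -/
noncomputable def upperSum {n : ℕ} (pr : Fin n → Fin n → Prop) (x : Fin n → ℝ) (o : Fin n) : ℝ :=
  ∑ o' ∈ Finset.univ, if pr o' o ∨ o' = o then x o' else 0

/-- `p` weakly (first-order) stochastically dominates `q` with respect to `pr`. -/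
def SdDom {n : ℕ} (pr : Fin n → Fin n → Prop) (p q : Fin n → ℝ) : Prop :=
  ∀ o, upperSum pr q o ≤ upperSum pr p o

/-- `p` strictly (first-order) stochastically dominates `q` with respect to `pr`. -/
def SdStrict {n : ℕ} (pr : Fin n → Fin n → Prop) (p q : Fin n → ℝ) : Prop :=
  SdDom pr p q ∧ ∃ o, upperSum pr q o < upperSum pr p o

/-- A housing market economy with fractional endowments: `n` agents, `n` objects,
each agent has a strict (linear order) preference over objects and the endowment
matrix is doubly stochastic. -/
structure Economy (n : ℕ) where
  pref : Fin n → Fin n → Fin n → Prop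
  pref_irrefl : ∀ i o, ¬ pref i o o
  pref_trans : ∀ i o₁ o₂ o₃, pref i o₁ o₂ → pref i o₂ o₃ → pref i o₁ o₃
  pref_total : ∀ i o o', o ≠ o' → pref i o o' ∨ pref i o' o
  endow : Fin n → Fin n → ℝ
  endow_nonneg : ∀ i o, 0 ≤ endow i o
  endow_row : ∀ i, ∑ o, endow i o = 1
  endow_col : ∀ o, ∑ i, endow i o = 1

/-- An allocation is a doubly stochastic matrix. -/
def IsAllocation {n : ℕ} (p : Fin n → Fin n → ℝ) : Prop :=
  (∀ i o, 0 ≤ p i o ∧ p i o ≤ 1) ∧ (∀ i, ∑ o, p i o = 1) ∧ (∀ o, ∑ i, p i o = 1)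

/-- Individual rationality. -/
def IR {n : ℕ} (E : Economy n) (p : Fin n → Fin n → ℝ) : Prop :=
  ∀ i, SdDom (E.pref i) (p i) (E.endow i)

/-- Coalition `I'` weakly blocks allocation `p` via allocation `p'`. -/
def WeaklyBlocks {n : ℕ} (E : Economy n) (I' : Finset (Fin n))
    (p p' : Fin n → Fin n → ℝ) : Prop :=
  (∀ o, ∑ i ∈ I', p' i o = ∑ i ∈ I', E.endow i o) ∧
  (∀ i ∈ I', SdDom (E.pref i) (p' i) (p i)) ∧
  (∃ j ∈ I', SdStrict (E.pref j) (p' j) (p j))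

/-- Coalition `I'` strongly blocks allocation `p` via allocation `p'`. -/
def StronglyBlocks {n : ℕ} (E : Economy n) (I' : Finset (Fin n))
    (p p' : Fin n → Fin n → ℝ) : Prop :=
  (∀ o, ∑ i ∈ I', p' i o = ∑ i ∈ I', E.endow i o) ∧
  (∀ i ∈ I', SdStrict (E.pref i) (p' i) (p i))

/-- The strong core: IR allocations not weakly blocked by any non-singleton coalition. -/
def InStrongCore {n : ℕ} (E : Economy n) (p : Fin n → Fin n → ℝ) : Prop :=
  IsAllocation p ∧ IR E p ∧
    ¬ ∃ (I' : Finset (Fin n)) (p' : Fin n → Fin n → ℝ),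
        1 < I'.card ∧ IsAllocation p' ∧ WeaklyBlocks E I' p p'

/-- The weak core: IR allocations not strongly blocked by any non-singleton coalition. -/
def InWeakCore {n : ℕ} (E : Economy n) (p : Fin n → Fin n → ℝ) : Prop :=
  IsAllocation p ∧ IR E p ∧
    ¬ ∃ (I' : Finset (Fin n)) (p' : Fin n → Fin n → ℝ),
        1 < I'.card ∧ IsAllocation p' ∧ StronglyBlocks E I' p p'

/-- Equal treatment of equals. -/
def ETE {n : ℕ} (E : Economy n) (p : Fin n → Fin n → ℝ) : Prop :=
  ∀ i j, E.endow i = E.endow j → E.pref i = E.pref j → p i = p j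

/-- Equal-endowment no envy. -/
def EENE {n : ℕ} (E : Economy n) (p : Fin n → Fin n → ℝ) : Prop :=
  ∀ i j, E.endow i = E.endow j →
    SdDom (E.pref i) (p i) (p j) ∧ SdDom (E.pref j) (p j) (p i)

/-- Endowments of the four-agent example economy:
agents 1 and 2 each own 1/2 of o1 and 1/2 of o3;
agents 3 and 4 each own 1/2 of o2 and 1/2 of o4. -/
noncomputable def endowEx : Fin 4 → Fin 4 → ℝ :=
  ![![1/2, 0, 1/2, 0], ![1/2, 0, 1/2, 0], ![0, 1/2, 0, 1/2], ![0, 1/2, 0, 1/2]]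

/-- Rankings encoding the preference profile ≻_I (lower rank = more preferred):
agent 1: o2 ≻ o1 ≻ o4 ≻ o3; agent 2: o2 ≻ o1 ≻ o4 ≻ o3;
agent 3: o1 ≻ o2 ≻ o3 ≻ o4; agent 4: o2 ≻ o1 ≻ o4 ≻ o3. -/
def rankA : Fin 4 → Fin 4 → ℕ :=
  ![![1, 0, 3, 2], ![1, 0, 3, 2], ![0, 1, 2, 3], ![1, 0, 3, 2]]

/-- The four-agent example economy with preference profile ≻_I. -/
noncomputable def economyA : Economy 4 where
  pref := fun i o o' => rankA i o < rankA i o'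
  pref_irrefl := fun _ _ => lt_irrefl _
  pref_trans := fun _ _ _ _ => Nat.lt_trans
  pref_total := by decide
  endow := endowEx
  endow_nonneg := by
    intro i o; fin_cases i <;> fin_cases o <;>
      norm_num [endowEx, Matrix.cons_val_zero, Matrix.cons_val_one, Matrix.head_cons,
        Matrix.cons_val_succ, Matrix.vecHead, Matrix.vecTail]
  endow_row := by
    intro i; fin_cases i <;>
      norm_num [endowEx, Fin.sum_univ_four, Matrix.cons_val_zero, Matrix.cons_val_one,
        Matrix.head_cons, Matrix.cons_val_succ, Matrix.vecHead, Matrix.vecTail,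
        Matrix.cons_val_two, Matrix.cons_val_three]
  endow_col := by
    intro o; fin_cases o <;>
      norm_num [endowEx, Fin.sum_univ_four, Matrix.cons_val_zero, Matrix.cons_val_one,
        Matrix.head_cons, Matrix.cons_val_succ, Matrix.vecHead, Matrix.vecTail,
        Matrix.cons_val_two, Matrix.cons_val_three]


lemma ocases : ∀ o : Fin 4, o = 0 ∨ o = 1 ∨ o = 2 ∨ o = 3 := by decide

lemma usA (i : Fin 4) (hi : i ≠ 2) (x : Fin 4 → ℝ) :
    upperSum (economyA.pref i) x 0 = x 0 + x 1 ∧ upperSum (economyA.pref i) x 1 = x 1 ∧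
    upperSum (economyA.pref i) x 2 = x 0 + x 1 + x 2 + x 3 ∧
    upperSum (economyA.pref i) x 3 = x 0 + x 1 + x 3 := by
  fin_cases i <;> first
  | exact absurd rfl hi
  | refine ⟨?_, ?_, ?_, ?_⟩ <;>
    · simp only [upperSum, Fin.sum_univ_four, economyA, rankA]
      norm_num
      try simp
      try ring

lemma usC (x : Fin 4 → ℝ) :
    upperSum (economyA.pref 2) x 0 = x 0 ∧ upperSum (economyA.pref 2) x 1 = x 0 + x 1 ∧
    upperSum (economyA.pref 2) x 2 = x 0 + x 1 + x 2 ∧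
    upperSum (economyA.pref 2) x 3 = x 0 + x 1 + x 2 + x 3 := by
  refine ⟨?_, ?_, ?_, ?_⟩ <;>
    · simp only [upperSum, Fin.sum_univ_four, economyA, rankA]
      norm_num
      try simp
      try ring

/-- Grand-coalition blocking: agent 2 (paper agent 3) swaps some of object 1 for
object 0 held by agent `k`. -/
lemma blockA (p : Fin 4 → Fin 4 → ℝ) (hp : IsAllocation p) (k : Fin 4) (hk : k ≠ 2)
    (h1 : 0 < p 2 1) (h2 : 0 < p k 0) :
    ∃ (I' : Finset (Fin 4)) (p' : Fin 4 → Fin 4 → ℝ),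
      1 < I'.card ∧ IsAllocation p' ∧ WeaklyBlocks economyA I' p p' := by
  obtain ⟨hb, hrow, hcol⟩ := hp
  have nn : ∀ i o, 0 ≤ p i o := fun i o => (hb i o).1
  set ε := min (p 2 1) (p k 0) with hεdef
  have hε0 : 0 < ε := lt_min h1 h2
  have hε1 : ε ≤ p 2 1 := min_le_left _ _
  have hε2 : ε ≤ p k 0 := min_le_right _ _
  set d : Fin 4 → ℝ := ![ε, -ε, 0, 0] with hd
  have d0 : d 0 = ε := rfl
  have d1 : d 1 = -ε := rfl
  have d2 : d 2 = 0 := rfl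
  have d3 : d 3 = 0 := rfl
  set p' : Fin 4 → Fin 4 → ℝ :=
    fun i o => p i o + ((if i = (2:Fin 4) then d o else 0) + (if i = k then -d o else 0)) with hp'
  have hk2 : ¬ ((2 : Fin 4) = k) := fun h => hk h.symm
  have ep2 : ∀ o, p' 2 o = p 2 o + d o := by
    intro o; simp only [hp', eq_self_iff_true, if_true, if_neg hk2]; ring
  have epk : ∀ o, p' k o = p k o - d o := by
    intro o; simp only [hp', eq_self_iff_true, if_true, if_neg hk]; ring
  have eby : ∀ i, i ≠ 2 → i ≠ k → ∀ o, p' i o = p i o := by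
    intro i hi2 hik o; simp only [hp', if_neg hi2, if_neg hik]; ring
  have row2 := hrow 2; rw [Fin.sum_univ_four] at row2
  have rowk := hrow k; rw [Fin.sum_univ_four] at rowk
  have halloc : IsAllocation p' := by
    refine ⟨?_, ?_, ?_⟩
    · intro i o
      by_cases hi2 : i = 2
      · subst hi2
        rcases ocases o with h|h|h|h <;> subst h <;> rw [ep2]
        · rw [d0]; constructor <;> linarith [nn 2 0, nn 2 1, nn 2 2, nn 2 3, (hb 2 0).2]
        · rw [d1]; constructor <;> linarith [nn 2 1, (hb 2 1).2]
        · rw [d2]; constructor <;> linarith [nn 2 2, (hb 2 2).2]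
        · rw [d3]; constructor <;> linarith [nn 2 3, (hb 2 3).2]
      · by_cases hik : i = k
        · subst hik
          rcases ocases o with h|h|h|h <;> subst h <;> rw [epk]
          · rw [d0]; constructor <;> linarith [nn i 0, (hb i 0).2]
          · rw [d1]; constructor <;> linarith [nn i 0, nn i 1, nn i 2, nn i 3, (hb i 1).2]
          · rw [d2]; constructor <;> linarith [nn i 2, (hb i 2).2]
          · rw [d3]; constructor <;> linarith [nn i 3, (hb i 3).2]
        · rw [eby i hi2 hik]; exact hb i o
    · intro i
      rw [Fin.sum_univ_four]
      by_cases hi2 : i = 2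
      · subst hi2; rw [ep2, ep2, ep2, ep2, d0, d1, d2, d3]; linarith
      · by_cases hik : i = k
        · subst hik; rw [epk, epk, epk, epk, d0, d1, d2, d3]; linarith
        · rw [eby i hi2 hik, eby i hi2 hik, eby i hi2 hik, eby i hi2 hik]
          have := hrow i; rw [Fin.sum_univ_four] at this; linarith
    · intro o
      have hsplit : ∑ i, p' i o = (∑ i, p i o) +
          ((∑ i : Fin 4, if i = (2:Fin 4) then d o else 0) +
           (∑ i : Fin 4, if i = k then -d o else 0)) := by
        simp only [hp']
        rw [← Finset.sum_add_distrib, ← Finset.sum_add_distrib]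
      rw [hsplit, Finset.sum_ite_eq' Finset.univ (2:Fin 4) (fun _ => d o),
        Finset.sum_ite_eq' Finset.univ k (fun _ => -d o), hcol o]
      simp
  obtain ⟨hb', hrow', hcol'⟩ := halloc
  refine ⟨Finset.univ, p', by simp, ⟨hb', hrow', hcol'⟩, ?_, ?_, ?_⟩
  · intro o
    rw [hcol' o, economyA.endow_col o]
  · intro i _
    by_cases hi2 : i = 2
    · subst hi2
      intro o
      obtain ⟨e0, e1, e2, e3⟩ := usC (p' 2)
      obtain ⟨f0, f1, f2, f3⟩ := usC (p 2)
      rcases ocases o with h|h|h|h <;> subst h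
      · rw [e0, f0, ep2, d0]; linarith
      · rw [e1, f1, ep2, ep2, d0, d1]; linarith
      · rw [e2, f2, ep2, ep2, ep2, d0, d1, d2]; linarith
      · rw [e3, f3, ep2, ep2, ep2, ep2, d0, d1, d2, d3]; linarith
    · by_cases hik : i = k
      · subst hik
        intro o
        obtain ⟨e0, e1, e2, e3⟩ := usA i hi2 (p' i)
        obtain ⟨f0, f1, f2, f3⟩ := usA i hi2 (p i)
        rcases ocases o with h|h|h|h <;> subst h
        · rw [e0, f0, epk, epk, d0, d1]; linarith
        · rw [e1, f1, epk, d1]; linarith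
        · rw [e2, f2, epk, epk, epk, epk, d0, d1, d2, d3]; linarith
        · rw [e3, f3, epk, epk, epk, d0, d1, d3]; linarith
      · intro o
        have he : p' i = p i := funext (eby i hi2 hik)
        rw [he]
  · refine ⟨2, Finset.mem_univ _, ?_, 0, ?_⟩
    · intro o
      obtain ⟨e0, e1, e2, e3⟩ := usC (p' 2)
      obtain ⟨f0, f1, f2, f3⟩ := usC (p 2)
      rcases ocases o with h|h|h|h <;> subst h
      · rw [e0, f0, ep2, d0]; linarith
      · rw [e1, f1, ep2, ep2, d0, d1]; linarith
      · rw [e2, f2, ep2, ep2, ep2, d0, d1, d2]; linarith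
      · rw [e3, f3, ep2, ep2, ep2, ep2, d0, d1, d2, d3]; linarith
    · rw [(usC (p' 2)).1, (usC (p 2)).1, ep2, d0]; linarith

/-- Grand-coalition blocking: agent 2 (paper agent 3) swaps some of object 3 for
object 2 held by agent `k`. -/
lemma blockB (p : Fin 4 → Fin 4 → ℝ) (hp : IsAllocation p) (k : Fin 4) (hk : k ≠ 2)
    (h1 : 0 < p 2 3) (h2 : 0 < p k 2) :
    ∃ (I' : Finset (Fin 4)) (p' : Fin 4 → Fin 4 → ℝ),
      1 < I'.card ∧ IsAllocation p' ∧ WeaklyBlocks economyA I' p p' := by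
  obtain ⟨hb, hrow, hcol⟩ := hp
  have nn : ∀ i o, 0 ≤ p i o := fun i o => (hb i o).1
  set ε := min (p 2 3) (p k 2) with hεdef
  have hε0 : 0 < ε := lt_min h1 h2
  have hε1 : ε ≤ p 2 3 := min_le_left _ _
  have hε2 : ε ≤ p k 2 := min_le_right _ _
  set d : Fin 4 → ℝ := ![0, 0, ε, -ε] with hd
  have d0 : d 0 = 0 := rfl
  have d1 : d 1 = 0 := rfl
  have d2 : d 2 = ε := rfl
  have d3 : d 3 = -ε := rfl
  set p' : Fin 4 → Fin 4 → ℝ :=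
    fun i o => p i o + ((if i = (2:Fin 4) then d o else 0) + (if i = k then -d o else 0)) with hp'
  have hk2 : ¬ ((2 : Fin 4) = k) := fun h => hk h.symm
  have ep2 : ∀ o, p' 2 o = p 2 o + d o := by
    intro o; simp only [hp', eq_self_iff_true, if_true, if_neg hk2]; ring
  have epk : ∀ o, p' k o = p k o - d o := by
    intro o; simp only [hp', eq_self_iff_true, if_true, if_neg hk]; ring
  have eby : ∀ i, i ≠ 2 → i ≠ k → ∀ o, p' i o = p i o := by
    intro i hi2 hik o; simp only [hp', if_neg hi2, if_neg hik]; ring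
  have row2 := hrow 2; rw [Fin.sum_univ_four] at row2
  have rowk := hrow k; rw [Fin.sum_univ_four] at rowk
  have halloc : IsAllocation p' := by
    refine ⟨?_, ?_, ?_⟩
    · intro i o
      by_cases hi2 : i = 2
      · subst hi2
        rcases ocases o with h|h|h|h <;> subst h <;> rw [ep2]
        · rw [d0]; constructor <;> linarith [nn 2 0, (hb 2 0).2]
        · rw [d1]; constructor <;> linarith [nn 2 1, (hb 2 1).2]
        · rw [d2]; constructor <;> linarith [nn 2 0, nn 2 1, nn 2 2, nn 2 3, (hb 2 2).2]
        · rw [d3]; constructor <;> linarith [nn 2 3, (hb 2 3).2]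
      · by_cases hik : i = k
        · subst hik
          rcases ocases o with h|h|h|h <;> subst h <;> rw [epk]
          · rw [d0]; constructor <;> linarith [nn i 0, (hb i 0).2]
          · rw [d1]; constructor <;> linarith [nn i 1, (hb i 1).2]
          · rw [d2]; constructor <;> linarith [nn i 2, (hb i 2).2]
          · rw [d3]; constructor <;> linarith [nn i 0, nn i 1, nn i 2, nn i 3, (hb i 3).2]
        · rw [eby i hi2 hik]; exact hb i o
    · intro i
      rw [Fin.sum_univ_four]
      by_cases hi2 : i = 2
      · subst hi2; rw [ep2, ep2, ep2, ep2, d0, d1, d2, d3]; linarith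
      · by_cases hik : i = k
        · subst hik; rw [epk, epk, epk, epk, d0, d1, d2, d3]; linarith
        · rw [eby i hi2 hik, eby i hi2 hik, eby i hi2 hik, eby i hi2 hik]
          have := hrow i; rw [Fin.sum_univ_four] at this; linarith
    · intro o
      have hsplit : ∑ i, p' i o = (∑ i, p i o) +
          ((∑ i : Fin 4, if i = (2:Fin 4) then d o else 0) +
           (∑ i : Fin 4, if i = k then -d o else 0)) := by
        simp only [hp']
        rw [← Finset.sum_add_distrib, ← Finset.sum_add_distrib]
      rw [hsplit, Finset.sum_ite_eq' Finset.univ (2:Fin 4) (fun _ => d o),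
        Finset.sum_ite_eq' Finset.univ k (fun _ => -d o), hcol o]
      simp
  obtain ⟨hb', hrow', hcol'⟩ := halloc
  refine ⟨Finset.univ, p', by simp, ⟨hb', hrow', hcol'⟩, ?_, ?_, ?_⟩
  · intro o
    rw [hcol' o, economyA.endow_col o]
  · intro i _
    by_cases hi2 : i = 2
    · subst hi2
      intro o
      obtain ⟨e0, e1, e2, e3⟩ := usC (p' 2)
      obtain ⟨f0, f1, f2, f3⟩ := usC (p 2)
      rcases ocases o with h|h|h|h <;> subst h
      · rw [e0, f0, ep2, d0]; linarith
      · rw [e1, f1, ep2, ep2, d0, d1]; linarith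
      · rw [e2, f2, ep2, ep2, ep2, d0, d1, d2]; linarith
      · rw [e3, f3, ep2, ep2, ep2, ep2, d0, d1, d2, d3]; linarith
    · by_cases hik : i = k
      · subst hik
        intro o
        obtain ⟨e0, e1, e2, e3⟩ := usA i hi2 (p' i)
        obtain ⟨f0, f1, f2, f3⟩ := usA i hi2 (p i)
        rcases ocases o with h|h|h|h <;> subst h
        · rw [e0, f0, epk, epk, d0, d1]; linarith
        · rw [e1, f1, epk, d1]; linarith
        · rw [e2, f2, epk, epk, epk, epk, d0, d1, d2, d3]; linarith
        · rw [e3, f3, epk, epk, epk, d0, d1, d3]; linarith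
      · intro o
        have he : p' i = p i := funext (eby i hi2 hik)
        rw [he]
  · refine ⟨2, Finset.mem_univ _, ?_, 2, ?_⟩
    · intro o
      obtain ⟨e0, e1, e2, e3⟩ := usC (p' 2)
      obtain ⟨f0, f1, f2, f3⟩ := usC (p 2)
      rcases ocases o with h|h|h|h <;> subst h
      · rw [e0, f0, ep2, d0]; linarith
      · rw [e1, f1, ep2, ep2, d0, d1]; linarith
      · rw [e2, f2, ep2, ep2, ep2, d0, d1, d2]; linarith
      · rw [e3, f3, ep2, ep2, ep2, ep2, d0, d1, d2, d3]; linarith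
    · rw [(usC (p' 2)).2.2.1, (usC (p 2)).2.2.1, ep2, ep2, ep2, d0, d1, d2]; linarith

/-- Final blocking step: agent `k ∈ {0,1}` together with agent 2. -/
lemma blockE (p : Fin 4 → Fin 4 → ℝ) (hp : IsAllocation p) (k : Fin 4)
    (hk : k = 0 ∨ k = 1)
    (h20 : p 2 0 = 1/2) (h21 : p 2 1 = 0) (h22 : p 2 2 = 1/2) (h23 : p 2 3 = 0)
    (hsk : p k 0 + p k 1 = 1/2) (hk3 : p k 3 ≤ 1/2) (hstrict : p k 1 < 1/2) :
    ∃ (I' : Finset (Fin 4)) (p' : Fin 4 → Fin 4 → ℝ),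
      1 < I'.card ∧ IsAllocation p' ∧ WeaklyBlocks economyA I' p p' := by
  obtain ⟨hb, hrow, hcol⟩ := hp
  have nn : ∀ i o, 0 ≤ p i o := fun i o => (hb i o).1
  have rowk := hrow k; rw [Fin.sum_univ_four] at rowk
  set v : Fin 4 → ℝ := ![0, 1/2, 0, 1/2] with hv
  set w : Fin 4 → ℝ := ![1/2, 0, 1/2, 0] with hw
  have v0 : v 0 = 0 := rfl
  have v1 : v 1 = 1/2 := rfl
  have v2 : v 2 = 0 := rfl
  have v3 : v 3 = 1/2 := rfl
  have w0 : w 0 = 1/2 := rfl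
  have w1 : w 1 = 0 := rfl
  have w2 : w 2 = 1/2 := rfl
  have w3 : w 3 = 0 := rfl
  set p' : Fin 4 → Fin 4 → ℝ := fun i o => if i = k then v o else if i = 2 then w o
      else if i = 3 then v o else w o with hp'
  have hk2 : k ≠ 2 := by rcases hk with h|h <;> subst h <;> decide
  have hn2 : ¬ ((2:Fin 4) = k) := fun h => hk2 h.symm
  have epk : p' k = v := by funext o; simp only [hp', if_pos rfl]
  have ep2 : p' 2 = w := by
    funext o; simp only [hp', if_neg hn2, eq_self_iff_true, if_true]
  have ev : ∀ i : Fin 4, p' i = v ∨ p' i = w := by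
    intro i
    by_cases h1 : i = k
    · left; rw [h1, epk]
    · by_cases h2 : i = 2
      · right; rw [h2, ep2]
      · by_cases h3 : i = 3
        · left; subst h3; simp only [hp', if_neg h1, if_neg h2, eq_self_iff_true, if_true]
        · right; simp only [hp', if_neg h1, if_neg h2, if_neg h3]
  have halloc : IsAllocation p' := by
    refine ⟨?_, ?_, ?_⟩
    · intro i o
      rcases ev i with h|h <;> rw [h] <;> rcases ocases o with ho|ho|ho|ho <;> subst ho <;>
        simp only [v0, v1, v2, v3, w0, w1, w2, w3] <;> norm_num
    · intro i
      rw [Fin.sum_univ_four]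
      rcases ev i with h|h <;> rw [h] <;>
        simp only [v0, v1, v2, v3, w0, w1, w2, w3] <;> norm_num
    · intro o
      rw [Fin.sum_univ_four]
      have e0 : p' 0 o + p' 1 o = v o + w o := by
        rcases hk with h|h <;> subst h
        · have a0 : p' 0 o = v o := by simp only [hp', eq_self_iff_true, if_true]
          have a1 : p' 1 o = w o := by
            simp only [hp', if_neg (show ¬((1:Fin 4) = 0) by decide),
              if_neg (show ¬((1:Fin 4) = 2) by decide),
              if_neg (show ¬((1:Fin 4) = 3) by decide)]
          rw [a0, a1]
        · have a0 : p' 0 o = w o := by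
            simp only [hp', if_neg (show ¬((0:Fin 4) = 1) by decide),
              if_neg (show ¬((0:Fin 4) = 2) by decide),
              if_neg (show ¬((0:Fin 4) = 3) by decide)]
          have a1 : p' 1 o = v o := by simp only [hp', eq_self_iff_true, if_true]
          rw [a0, a1]; ring
      have e2 : p' 2 o = w o := by rw [ep2]
      have e3 : p' 3 o = v o := by
        have h3k : ¬((3:Fin 4) = k) := by rcases hk with h|h <;> subst h <;> decide
        simp only [hp', if_neg h3k, if_neg (show ¬((3:Fin 4) = 2) by decide),
          eq_self_iff_true, if_true]
      have : p' 0 o + p' 1 o + p' 2 o + p' 3 o = (v o + w o) + w o + v o := by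
        rw [e2, e3]; linarith [e0]
      rw [this]
      rcases ocases o with ho|ho|ho|ho <;> subst ho <;>
        simp only [v0, v1, v2, v3, w0, w1, w2, w3] <;> norm_num
  obtain ⟨hb', hrow', hcol'⟩ := halloc
  have hkmem : k ∈ ({k, 2} : Finset (Fin 4)) := Finset.mem_insert_self _ _
  have h2mem : (2:Fin 4) ∈ ({k, 2} : Finset (Fin 4)) :=
    Finset.mem_insert_of_mem (Finset.mem_singleton_self _)
  refine ⟨{k, 2}, p', ?_, ⟨hb', hrow', hcol'⟩, ?_, ?_, ?_⟩
  · rw [Finset.card_pair hk2]; norm_num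
  · intro o
    rw [Finset.sum_pair hk2, Finset.sum_pair hk2, epk, ep2]
    have hek : economyA.endow k = ![1/2, 0, 1/2, 0] := by
      rcases hk with h|h <;> subst h <;> rfl
    have he2 : economyA.endow 2 = ![0, 1/2, 0, 1/2] := rfl
    rw [hek, he2]
    rcases ocases o with ho|ho|ho|ho <;> subst ho <;>
      simp only [v0, v1, v2, v3, w0, w1, w2, w3] <;> norm_num [Matrix.cons_val_zero,
        Matrix.cons_val_one, Matrix.head_cons, Matrix.cons_val_two, Matrix.cons_val_three]
  · intro i hi
    rcases Finset.mem_insert.mp hi with h|h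
    · subst h
      intro o
      obtain ⟨e0, e1, e2, e3⟩ := usA i hk2 (p' i)
      obtain ⟨f0, f1, f2, f3⟩ := usA i hk2 (p i)
      rw [epk] at e0 e1 e2 e3
      rcases ocases o with ho|ho|ho|ho <;> subst ho
      · rw [epk, e0, f0, v0, v1]; linarith
      · rw [epk, e1, f1, v1]; linarith
      · rw [epk, e2, f2, v0, v1, v2, v3]; linarith
      · rw [epk, e3, f3, v0, v1, v3]; linarith [nn i 2]
    · rw [Finset.mem_singleton.mp h]
      intro o
      obtain ⟨e0, e1, e2, e3⟩ := usC (p' 2)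
      obtain ⟨f0, f1, f2, f3⟩ := usC (p 2)
      rw [ep2] at e0 e1 e2 e3
      rcases ocases o with ho|ho|ho|ho <;> subst ho
      · rw [ep2, e0, f0, w0]; linarith
      · rw [ep2, e1, f1, w0, w1]; linarith
      · rw [ep2, e2, f2, w0, w1, w2]; linarith
      · rw [ep2, e3, f3, w0, w1, w2, w3]; linarith
  · refine ⟨k, hkmem, ?_, 1, ?_⟩
    · intro o
      obtain ⟨e0, e1, e2, e3⟩ := usA k hk2 (p' k)
      obtain ⟨f0, f1, f2, f3⟩ := usA k hk2 (p k)
      rw [epk] at e0 e1 e2 e3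
      rcases ocases o with ho|ho|ho|ho <;> subst ho
      · rw [epk, e0, f0, v0, v1]; linarith
      · rw [epk, e1, f1, v1]; linarith
      · rw [epk, e2, f2, v0, v1, v2, v3]; linarith
      · rw [epk, e3, f3, v0, v1, v3]; linarith [nn k 2]
    · have e1 := (usA k hk2 (p' k)).2.1
      have f1 := (usA k hk2 (p k)).2.1
      rw [epk] at e1
      rw [epk, e1, f1, v1]; linarith

/-- in the example economy with profile ≻_I, the strong core is empty. -/
theorem strong_core_empty_exampleA :
    ¬ ∃ p : Fin 4 → Fin 4 → ℝ, InStrongCore economyA p := by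
  rintro ⟨p, hAll, hIR, hNB⟩
  obtain ⟨hb, hrow, hcol⟩ := hAll
  have nn : ∀ i o, 0 ≤ p i o := fun i o => (hb i o).1
  have r0 := hrow 0; rw [Fin.sum_univ_four] at r0
  have r1 := hrow 1; rw [Fin.sum_univ_four] at r1
  have r2 := hrow 2; rw [Fin.sum_univ_four] at r2
  have r3 := hrow 3; rw [Fin.sum_univ_four] at r3
  have c0 := hcol 0; rw [Fin.sum_univ_four] at c0
  have c1 := hcol 1; rw [Fin.sum_univ_four] at c1
  have c2 := hcol 2; rw [Fin.sum_univ_four] at c2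
  -- IR consequences
  have hE0 : economyA.endow 0 = ![1/2, 0, 1/2, 0] := rfl
  have hE1 : economyA.endow 1 = ![1/2, 0, 1/2, 0] := rfl
  have hE2 : economyA.endow 2 = ![0, 1/2, 0, 1/2] := rfl
  have hE3 : economyA.endow 3 = ![0, 1/2, 0, 1/2] := rfl
  have ir0 : 1/2 ≤ p 0 0 + p 0 1 := by
    have h := hIR 0 0
    rw [(usA 0 (by decide) (economyA.endow 0)).1, (usA 0 (by decide) (p 0)).1, hE0] at h
    norm_num at h; linarith
  have ir1 : 1/2 ≤ p 1 0 + p 1 1 := by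
    have h := hIR 1 0
    rw [(usA 1 (by decide) (economyA.endow 1)).1, (usA 1 (by decide) (p 1)).1, hE1] at h
    norm_num at h; linarith
  have ir2 : 1/2 ≤ p 2 0 + p 2 1 := by
    have h := hIR 2 1
    rw [(usC (economyA.endow 2)).2.1, (usC (p 2)).2.1, hE2] at h
    norm_num at h; linarith
  have ir3a : 1/2 ≤ p 3 1 := by
    have h := hIR 3 1
    rw [(usA 3 (by decide) (economyA.endow 3)).2.1, (usA 3 (by decide) (p 3)).2.1, hE3] at h
    norm_num at h; linarith
  have ir3b : 1 ≤ p 3 0 + p 3 1 + p 3 3 := by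
    have h := hIR 3 3
    rw [(usA 3 (by decide) (economyA.endow 3)).2.2.2, (usA 3 (by decide) (p 3)).2.2.2, hE3] at h
    norm_num [Matrix.cons_val_three] at h; linarith
  -- Step A: p 2 1 = 0
  have hA : p 2 1 = 0 := by
    by_contra h
    have h1 : 0 < p 2 1 := lt_of_le_of_ne (nn 2 1) (Ne.symm h)
    have hx : 0 < p 0 0 ∨ 0 < p 1 0 ∨ 0 < p 3 0 := by
      by_contra hc
      push_neg at hc
      obtain ⟨a, b, c⟩ := hc
      linarith [nn 2 2, nn 2 3, nn 0 0, nn 1 0, nn 3 0]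
    rcases hx with hx|hx|hx
    · exact hNB (blockA p ⟨hb, hrow, hcol⟩ 0 (by decide) h1 hx)
    · exact hNB (blockA p ⟨hb, hrow, hcol⟩ 1 (by decide) h1 hx)
    · exact hNB (blockA p ⟨hb, hrow, hcol⟩ 3 (by decide) h1 hx)
  -- Step B: p 2 3 = 0
  have hB : p 2 3 = 0 := by
    by_contra h
    have h1 : 0 < p 2 3 := lt_of_le_of_ne (nn 2 3) (Ne.symm h)
    have hx : 0 < p 0 2 ∨ 0 < p 1 2 ∨ 0 < p 3 2 := by
      by_contra hc
      push_neg at hc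
      obtain ⟨a, b, c⟩ := hc
      linarith [nn 2 0, nn 0 2, nn 1 2, nn 3 2]
    rcases hx with hx|hx|hx
    · exact hNB (blockB p ⟨hb, hrow, hcol⟩ 0 (by decide) h1 hx)
    · exact hNB (blockB p ⟨hb, hrow, hcol⟩ 1 (by decide) h1 hx)
    · exact hNB (blockB p ⟨hb, hrow, hcol⟩ 3 (by decide) h1 hx)
  -- arithmetic consequences
  have h32 : p 3 2 = 0 := by linarith [nn 3 2]
  have q20 : p 2 0 = 1/2 := by linarith [nn 3 0, nn 0 0, nn 1 0, nn 0 1, nn 1 1]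
  have q30 : p 3 0 = 0 := by linarith [nn 3 0, nn 0 0, nn 1 0, nn 0 1, nn 1 1]
  have q31 : p 3 1 = 1/2 := by linarith [nn 3 0, nn 0 0, nn 1 0, nn 0 1, nn 1 1]
  have s0 : p 0 0 + p 0 1 = 1/2 := by linarith [nn 3 0, nn 0 0, nn 1 0, nn 0 1, nn 1 1]
  have s1 : p 1 0 + p 1 1 = 1/2 := by linarith [nn 3 0, nn 0 0, nn 1 0, nn 0 1, nn 1 1]
  have q22 : p 2 2 = 1/2 := by linarith
  have h03 : p 0 3 ≤ 1/2 := by linarith [nn 0 2]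
  have h13 : p 1 3 ≤ 1/2 := by linarith [nn 1 2]
  -- Step E
  by_cases hc : p 0 1 < 1/2
  · exact hNB (blockE p ⟨hb, hrow, hcol⟩ 0 (Or.inl rfl) q20 hA q22 hB s0 h03 hc)
  · push_neg at hc
    have hc1 : p 1 1 < 1/2 := by linarith [nn 0 0]
    exact hNB (blockE p ⟨hb, hrow, hcol⟩ 1 (Or.inr rfl) q20 hA q22 hB s1 h13 hc1)
end

section
/- In the four-agent example economy with preference profile ≻_I, every individually rational allocation p gives agent 4 exactly his endowment: p_4 = (0, 1/2, 0, 1/2). -/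
open Finset

/-- in the example economy with profile ≻_I, every IR allocation gives
agent 4 exactly his endowment (0, 1/2, 0, 1/2). -/
theorem ir_agent4_endowment_exampleA (p : Fin 4 → Fin 4 → ℝ)
    (hp : IsAllocation p) (hIR : IR economyA p) :
    p 3 = ![0, 1 / 2, 0, 1 / 2] := by
  obtain ⟨hnn, hrow, hcol⟩ := hp
  have h0 := hIR 0 0
  have h1 := hIR 1 0
  have h2 := hIR 2 1
  have h3a := hIR 3 0
  have h3b := hIR 3 1
  have h3c := hIR 3 3
  simp [economyA, upperSum, endowEx, rankA, Fin.sum_univ_four,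
    Matrix.vecHead, Matrix.vecTail] at h0 h1 h2 h3a h3b h3c
  have hc0 := hcol 0
  have hc1 := hcol 1
  have hr3 := hrow 3
  simp only [Fin.sum_univ_four] at hc0 hc1 hr3
  have n30 := (hnn 3 0).1
  have n32 := (hnn 3 2).1
  funext o
  fin_cases o <;> simp <;> linarith
end

section
/- In the four-agent example economy with preference profile ≻_I, an individually rational allocation p is not weakly blocked by the coalition {1,3} if and only if p_1 = ω_3 = (0, 1/2, 0, 1/2) and p_3 = ω_1 = (1/2, 0, 1/2, 0); symmetrically, p is not weakly blocked by the coalition {2,3} if and only if p_2 = ω_3 and p_3 = ω_2. -/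
open Finset

attribute [local simp] Matrix.cons_val_two Matrix.cons_val_three

lemma usA_0 (x : Fin 4 → ℝ) : upperSum (economyA.pref 0) x 0 = x 0 + x 1 := by
  simp [upperSum, Fin.sum_univ_four, economyA, rankA]
lemma usA_1 (x : Fin 4 → ℝ) : upperSum (economyA.pref 0) x 1 = x 1 := by
  simp [upperSum, Fin.sum_univ_four, economyA, rankA]
lemma usA_2 (x : Fin 4 → ℝ) : upperSum (economyA.pref 0) x 2 = x 0 + x 1 + x 2 + x 3 := by
  simp [upperSum, Fin.sum_univ_four, economyA, rankA]
lemma usA_3 (x : Fin 4 → ℝ) : upperSum (economyA.pref 0) x 3 = x 0 + x 1 + x 3 := by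
  simp [upperSum, Fin.sum_univ_four, economyA, rankA]
lemma usB_0 (x : Fin 4 → ℝ) : upperSum (economyA.pref 2) x 0 = x 0 := by
  simp [upperSum, Fin.sum_univ_four, economyA, rankA]
lemma usB_1 (x : Fin 4 → ℝ) : upperSum (economyA.pref 2) x 1 = x 0 + x 1 := by
  simp [upperSum, Fin.sum_univ_four, economyA, rankA]
lemma usB_2 (x : Fin 4 → ℝ) : upperSum (economyA.pref 2) x 2 = x 0 + x 1 + x 2 := by
  simp [upperSum, Fin.sum_univ_four, economyA, rankA]
lemma usB_3 (x : Fin 4 → ℝ) : upperSum (economyA.pref 2) x 3 = x 0 + x 1 + x 2 + x 3 := by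
  simp [upperSum, Fin.sum_univ_four, economyA, rankA]

lemma pref_eq (i : Fin 4) (hi : i = 0 ∨ i = 1 ∨ i = 3) :
    economyA.pref i = economyA.pref 0 := by
  have h : rankA i = rankA 0 := by obtain rfl | rfl | rfl := hi <;> decide
  show (fun o o' => rankA i o < rankA i o') = fun o o' => rankA 0 o < rankA 0 o'
  rw [h]




lemma fin4_cases (o : Fin 4) : o = 0 ∨ o = 1 ∨ o = 2 ∨ o = 3 := by fin_cases o <;> simp

/-- The blocking allocation used for coalition {k, 2}. -/
noncomputable def pblock (k : Fin 4) : Fin 4 → Fin 4 → ℝ := fun i =>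
  if i = k then ![0, 1/2, 0, 1/2]
  else if i = 2 then ![1/2, 0, 1/2, 0]
  else if i = 3 then ![0, 1/2, 0, 1/2]
  else ![1/2, 0, 1/2, 0]

lemma pblock_alloc (k : Fin 4) (hk : k = 0 ∨ k = 1) : IsAllocation (pblock k) := by
  obtain rfl | rfl := hk <;>
    exact ⟨fun i o => by
        fin_cases i <;> fin_cases o <;>
          simp (config := { decide := true }) only [pblock] <;> norm_num,
      fun i => by
        fin_cases i <;>
          simp (config := { decide := true }) only [pblock, Fin.sum_univ_four] <;> norm_num,
      fun o => by
        fin_cases o <;>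
          simp (config := { decide := true }) only [pblock, Fin.sum_univ_four] <;> norm_num⟩

lemma pblock_rows (k : Fin 4) (hk2 : k ≠ 2) :
    pblock k k = ![0, 1/2, 0, 1/2] ∧ pblock k 2 = ![1/2, 0, 1/2, 0] := by
  constructor
  · funext o; simp [pblock]
  · funext o; simp [pblock, Ne.symm hk2]

lemma endow_pair (k : Fin 4) (hk : k = 0 ∨ k = 1) (o : Fin 4) :
    economyA.endow k o + economyA.endow 2 o = 1/2 := by
  obtain rfl | rfl := hk <;> fin_cases o <;> norm_num [economyA, endowEx]

set_option maxHeartbeats 1000000 in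
lemma blocked_aux (p : Fin 4 → Fin 4 → ℝ) (hp : IsAllocation p) (hIR : IR economyA p)
    (k : Fin 4) (hk : k = 0 ∨ k = 1) :
    (¬ ∃ p' : Fin 4 → Fin 4 → ℝ,
        IsAllocation p' ∧ WeaklyBlocks economyA {k, 2} p p') ↔
      (p k = ![0, 1 / 2, 0, 1 / 2] ∧ p 2 = ![1 / 2, 0, 1 / 2, 0]) := by
  obtain ⟨hpos, hrow, hcol⟩ := hp
  have hnn : ∀ i o, 0 ≤ p i o := fun i o => (hpos i o).1
  have hrow4 : ∀ i, p i 0 + p i 1 + p i 2 + p i 3 = 1 := by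
    intro i; have := hrow i; rwa [Fin.sum_univ_four] at this
  have hcol0 : p 0 0 + p 1 0 + p 2 0 + p 3 0 = 1 := by
    have := hcol 0; rwa [Fin.sum_univ_four] at this
  have hcol1 : p 0 1 + p 1 1 + p 2 1 + p 3 1 = 1 := by
    have := hcol 1; rwa [Fin.sum_univ_four] at this
  have hpr1 : economyA.pref 1 = economyA.pref 0 := pref_eq 1 (by simp)
  have hpr3 : economyA.pref 3 = economyA.pref 0 := pref_eq 3 (by simp)
  have hprk : economyA.pref k = economyA.pref 0 :=
    pref_eq k (by rcases hk with rfl | rfl <;> simp)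
  have hk2 : k ≠ 2 := by obtain rfl | rfl := hk <;> decide
  -- IR consequences
  have IR0 : 1/2 ≤ p 0 0 + p 0 1 := by
    have h := hIR 0 0
    rw [usA_0, usA_0] at h
    norm_num [economyA, endowEx, Matrix.cons_val_zero, Matrix.cons_val_one, Matrix.head_cons,
      Matrix.cons_val_succ, Matrix.vecHead, Matrix.vecTail] at h
    linarith
  have IR1 : 1/2 ≤ p 1 0 + p 1 1 := by
    have h := hIR 1 0
    rw [hpr1, usA_0, usA_0] at h
    norm_num [economyA, endowEx, Matrix.cons_val_zero, Matrix.cons_val_one, Matrix.head_cons,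
      Matrix.cons_val_succ, Matrix.vecHead, Matrix.vecTail] at h
    linarith
  have IR3 : 1/2 ≤ p 3 0 + p 3 1 := by
    have h := hIR 3 0
    rw [hpr3, usA_0, usA_0] at h
    norm_num [economyA, endowEx, Matrix.cons_val_zero, Matrix.cons_val_one, Matrix.head_cons,
      Matrix.cons_val_succ, Matrix.vecHead, Matrix.vecTail] at h
    linarith
  have IR2 : 1/2 ≤ p 2 0 + p 2 1 := by
    have h := hIR 2 1
    rw [usB_1, usB_1] at h
    norm_num [economyA, endowEx, Matrix.cons_val_zero, Matrix.cons_val_one, Matrix.head_cons,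
      Matrix.cons_val_succ, Matrix.vecHead, Matrix.vecTail] at h
    linarith
  have key0 : p 0 0 + p 0 1 = 1/2 := by linarith
  have key1 : p 1 0 + p 1 1 = 1/2 := by linarith
  have key2 : p 2 0 + p 2 1 = 1/2 := by linarith
  have keyk : p k 0 + p k 1 = 1/2 := by obtain rfl | rfl := hk; exacts [key0, key1]
  have hbk := (pblock_rows k hk2).1
  have hb2 := (pblock_rows k hk2).2
  -- SdDom of the blocking rows over p
  have hdomk : SdDom (economyA.pref k) (pblock k k) (p k) := by
    intro o
    rw [hprk, hbk]
    rcases fin4_cases o with rfl | rfl | rfl | rfl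
    · rw [usA_0, usA_0]; norm_num; linarith
    · rw [usA_1, usA_1]; norm_num; linarith [hnn k 0]
    · rw [usA_2, usA_2]; norm_num; linarith [hrow4 k]
    · rw [usA_3, usA_3]; norm_num; linarith [hnn k 2, hrow4 k]
  have hdom2 : SdDom (economyA.pref 2) (pblock k 2) (p 2) := by
    intro o
    rw [hb2]
    rcases fin4_cases o with rfl | rfl | rfl | rfl
    · rw [usB_0, usB_0]; norm_num; linarith [hnn 2 1]
    · rw [usB_1, usB_1]; norm_num; linarith
    · rw [usB_2, usB_2]; norm_num; linarith [hnn 2 3, hrow4 2]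
    · rw [usB_3, usB_3]; norm_num; linarith [hrow4 2]
  constructor
  · -- not blocked → targets
    intro hnb
    by_contra hne
    apply hnb
    refine ⟨pblock k, pblock_alloc k hk, ?_, ?_, ?_⟩
    · intro o
      rw [Finset.sum_pair hk2, Finset.sum_pair hk2]
      have h1 := endow_pair k hk o
      have h2 : pblock k k o + pblock k 2 o = 1/2 := by
        rw [hbk, hb2]
        rcases fin4_cases o with rfl | rfl | rfl | rfl <;> norm_num
      linarith
    · intro i hi
      rcases Finset.mem_insert.1 hi with rfl | hi'
      · exact hdomk
      · rw [Finset.mem_singleton.1 hi']; exact hdom2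
    · rcases not_and_or.1 hne with h | h
      · refine ⟨k, Finset.mem_insert_self _ _, hdomk, ?_⟩
        by_contra hno
        push_neg at hno
        apply h
        have e1 : p k 1 = 1/2 := by
          have h1 := hno 1
          have h1' := hdomk 1
          rw [hprk, hbk, usA_1, usA_1] at h1 h1'
          norm_num at h1 h1'
          linarith
        have e3 : p k 0 + p k 1 + p k 3 = 1 := by
          have h1 := hno 3
          have h1' := hdomk 3
          rw [hprk, hbk, usA_3, usA_3] at h1 h1'
          norm_num at h1 h1'
          linarith
        have ek0 : p k 0 = 0 := by linarith
        have ek3 : p k 3 = 1/2 := by linarith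
        have ek2 : p k 2 = 0 := by linarith [hnn k 2, hrow4 k]
        funext o
        rcases fin4_cases o with rfl | rfl | rfl | rfl
        · rw [ek0]; norm_num
        · rw [e1]; norm_num
        · rw [ek2]; norm_num
        · rw [ek3]; norm_num
      · refine ⟨2, by simp, hdom2, ?_⟩
        by_contra hno
        push_neg at hno
        apply h
        have e0 : p 2 0 = 1/2 := by
          have h1 := hno 0
          have h1' := hdom2 0
          rw [hb2, usB_0, usB_0] at h1 h1'
          norm_num at h1 h1'
          linarith
        have e2 : p 2 0 + p 2 1 + p 2 2 = 1 := by
          have h1 := hno 2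
          have h1' := hdom2 2
          rw [hb2, usB_2, usB_2] at h1 h1'
          norm_num at h1 h1'
          linarith
        have e21 : p 2 1 = 0 := by linarith
        have e22 : p 2 2 = 1/2 := by linarith
        have e23 : p 2 3 = 0 := by linarith [hrow4 2]
        funext o
        rcases fin4_cases o with rfl | rfl | rfl | rfl
        · rw [e0]; norm_num
        · rw [e21]; norm_num
        · rw [e22]; norm_num
        · rw [e23]; norm_num
  · -- targets → not blocked
    rintro ⟨h0, h2t⟩ ⟨p', ⟨hp'pos, hp'row, hp'col⟩, hsum, hdom, j, hj, hjdom, o₀, hlt⟩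
    have hnn' : ∀ i o, 0 ≤ p' i o := fun i o => (hp'pos i o).1
    have hsum' : ∀ o, p' k o + p' 2 o = 1/2 := by
      intro o
      have := hsum o
      rw [Finset.sum_pair hk2, Finset.sum_pair hk2] at this
      have he := endow_pair k hk o
      linarith
    have hdk := hdom k (Finset.mem_insert_self _ _)
    rw [hprk] at hdk
    have hd2 := hdom 2 (by simp)
    have a1 : 1/2 ≤ p' k 1 := by
      have h := hdk 1
      rw [h0, usA_1, usA_1] at h
      norm_num at h
      linarith
    have a3 : 1 ≤ p' k 0 + p' k 1 + p' k 3 := by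
      have h := hdk 3
      rw [h0, usA_3, usA_3] at h
      norm_num at h
      linarith
    have b0 : 1/2 ≤ p' 2 0 := by
      have h := hd2 0
      rw [h2t, usB_0, usB_0] at h
      norm_num at h
      linarith
    have b2 : 1 ≤ p' 2 0 + p' 2 1 + p' 2 2 := by
      have h := hd2 2
      rw [h2t, usB_2, usB_2] at h
      norm_num at h
      linarith
    have qk1 : p' k 1 = 1/2 := by linarith [hsum' 1, hnn' 2 1]
    have q21 : p' 2 1 = 0 := by linarith [hsum' 1]
    have q20 : p' 2 0 = 1/2 := by linarith [hsum' 0, hnn' k 0]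
    have qk0 : p' k 0 = 0 := by linarith [hsum' 0]
    have qk3 : p' k 3 = 1/2 := by linarith [hsum' 3, hnn' 2 3]
    have q23 : p' 2 3 = 0 := by linarith [hsum' 3]
    have q22 : p' 2 2 = 1/2 := by linarith [hsum' 2, hnn' k 2]
    have qk2 : p' k 2 = 0 := by linarith [hsum' 2]
    rcases Finset.mem_insert.1 hj with hjk | hj'
    · rw [hjk] at hlt
      have hpe : p' k = p k := by
        rw [h0]
        funext o
        rcases fin4_cases o with rfl | rfl | rfl | rfl
        · rw [qk0]; norm_num
        · rw [qk1]; norm_num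
        · rw [qk2]; norm_num
        · rw [qk3]; norm_num
      rw [hpe] at hlt
      exact lt_irrefl _ hlt
    · obtain rfl := Finset.mem_singleton.1 hj'
      have hpe : p' 2 = p 2 := by
        rw [h2t]
        funext o
        rcases fin4_cases o with rfl | rfl | rfl | rfl
        · rw [q20]; norm_num
        · rw [q21]; norm_num
        · rw [q22]; norm_num
        · rw [q23]; norm_num
      rw [hpe] at hlt
      exact lt_irrefl _ hlt


/-- in the example economy with profile ≻_I, an IR allocation is not weakly
blocked by {1,3} iff p₁ = ω₃ and p₃ = ω₁; and it is not weakly blocked by {2,3} iff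
p₂ = ω₃ and p₃ = ω₂. (Agents 1,2,3 are indices 0,1,2.) -/
theorem not_blocked_iff_exampleA (p : Fin 4 → Fin 4 → ℝ)
    (hp : IsAllocation p) (hIR : IR economyA p) :
    ((¬ ∃ p' : Fin 4 → Fin 4 → ℝ,
        IsAllocation p' ∧ WeaklyBlocks economyA {0, 2} p p') ↔
      (p 0 = ![0, 1 / 2, 0, 1 / 2] ∧ p 2 = ![1 / 2, 0, 1 / 2, 0])) ∧
    ((¬ ∃ p' : Fin 4 → Fin 4 → ℝ,
        IsAllocation p' ∧ WeaklyBlocks economyA {1, 2} p p') ↔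
      (p 1 = ![0, 1 / 2, 0, 1 / 2] ∧ p 2 = ![1 / 2, 0, 1 / 2, 0])) :=
  ⟨blocked_aux p hp hIR 0 (Or.inl rfl), blocked_aux p hp hIR 1 (Or.inr rfl)⟩
end

section
/- Let (x, P, α) be a Walrasian equilibrium with slack for an economy with consistent vNM utilities and parameter ε > 0, where agents with equal preferences and equal endowments are endowed with equal utility vectors. Partition the agents into classes I_1,...,I_K of agents with equal preferences and equal endowments, and for each agent i in class I_ℓ define y_i = (Σ_{j∈I_ℓ} x_j)/|I_ℓ|. Then (y, P, α) is also a Walrasian equilibrium with slack for the same ε, and the allocation y satisfies equal treatment of equals. -/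
open Finset

/-- Agent `i`'s consumption space `X^ε_i`: assignments in `[0,1]^n` with total at most `1`
whose upper contour sums fall short of those of the endowment by at most `ε`. -/
def Xeps {n : ℕ} (E : Economy n) (i : Fin n) (ε : ℝ) : Set (Fin n → ℝ) :=
  {x | (∀ o, 0 ≤ x o ∧ x o ≤ 1) ∧ (∑ o, x o ≤ 1) ∧
       ∀ o, upperSum (E.pref i) (E.endow i) o - ε ≤ upperSum (E.pref i) x o}

/-- Expected utility of `x` under vNM utilities `u`. -/
def expUtil {n : ℕ} (u : Fin n → ℝ) (x : Fin n → ℝ) : ℝ := ∑ o, u o * x o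

/-- `u` is a profile of nonnegative vNM utility vectors consistent with the preferences. -/
def Consistent {n : ℕ} (E : Economy n) (u : Fin n → Fin n → ℝ) : Prop :=
  (∀ i o, 0 ≤ u i o) ∧ ∀ i o o', E.pref i o o' ↔ u i o' < u i o

/-- Walrasian equilibrium with slack for parameter `ε`: prices in the simplex, slack `α ≥ 0`,
markets clear, and each agent maximizes expected utility on the budget set within `X^ε_i`. -/
def WEslack {n : ℕ} (E : Economy n) (u : Fin n → Fin n → ℝ) (ε : ℝ)
    (x : Fin n → Fin n → ℝ) (P : Fin n → ℝ) (α : ℝ) : Prop :=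
  (∀ o, 0 ≤ P o) ∧ (∑ o, P o ≤ 1) ∧ 0 ≤ α ∧
  (∀ o, ∑ i, x i o = ∑ i, E.endow i o) ∧
  ∀ i, x i ∈ Xeps E i ε ∧ (∑ o, P o * x i o ≤ ∑ o, P o * E.endow i o + α) ∧
    ∀ z ∈ Xeps E i ε, (∑ o, P o * z o ≤ ∑ o, P o * E.endow i o + α) →
      expUtil (u i) z ≤ expUtil (u i) (x i)

open Classical in
/-- The class of agents with the same endowment and the same preference as agent `i`. -/
noncomputable def eqClass {n : ℕ} (E : Economy n) (i : Fin n) : Finset (Fin n) :=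
  Finset.univ.filter (fun j => E.endow j = E.endow i ∧ E.pref j = E.pref i)

section AuxAvg

variable {n : ℕ}

lemma mem_eqClass_iff {E : Economy n} {i j : Fin n} :
    j ∈ eqClass E i ↔ E.endow j = E.endow i ∧ E.pref j = E.pref i := by
  simp [eqClass]

lemma self_mem_eqClass (E : Economy n) (i : Fin n) : i ∈ eqClass E i := by
  simp [eqClass]

lemma eqClass_eq_of_eq {E : Economy n} {i j : Fin n}
    (h1 : E.endow j = E.endow i) (h2 : E.pref j = E.pref i) :
    eqClass E j = eqClass E i := by
  ext k; simp [eqClass, h1, h2]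

lemma eqClass_card_pos (E : Economy n) (i : Fin n) :
    (0 : ℝ) < ((eqClass E i).card : ℝ) :=
  Nat.cast_pos.mpr (Finset.card_pos.mpr ⟨i, self_mem_eqClass E i⟩)

lemma lin_avg (w : Fin n → ℝ) (s : Finset (Fin n)) (f : Fin n → Fin n → ℝ) (c : ℝ) :
    ∑ o, w o * ((∑ j ∈ s, f j o) / c) = (∑ j ∈ s, ∑ o, w o * f j o) / c := by
  have h : ∀ o, w o * ((∑ j ∈ s, f j o) / c) = (∑ j ∈ s, w o * f j o) / c := fun o => by
    rw [← mul_div_assoc, Finset.mul_sum]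
  simp_rw [h, ← Finset.sum_div]
  rw [Finset.sum_comm]

lemma upperSum_avg (pr : Fin n → Fin n → Prop) (s : Finset (Fin n))
    (f : Fin n → Fin n → ℝ) (c : ℝ) (o : Fin n) :
    upperSum pr (fun o' => (∑ j ∈ s, f j o') / c) o
      = (∑ j ∈ s, upperSum pr (f j) o) / c := by
  classical
  unfold upperSum
  have h : ∀ o' : Fin n, (if pr o' o ∨ o' = o then (∑ j ∈ s, f j o') / c else 0)
      = (∑ j ∈ s, if pr o' o ∨ o' = o then f j o' else 0) / c := fun o' => by
    by_cases h : pr o' o ∨ o' = o <;> simp [h]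
  simp_rw [h, ← Finset.sum_div]
  rw [Finset.sum_comm]

open Classical in
lemma sum_avg (E : Economy n) (f : Fin n → ℝ) :
    ∑ i, (∑ j ∈ eqClass E i, f j) / ((eqClass E i).card : ℝ) = ∑ j, f j := by
  have step1 : ∀ i : Fin n, (∑ j ∈ eqClass E i, f j) / ((eqClass E i).card : ℝ)
      = ∑ j, if i ∈ eqClass E j then f j / ((eqClass E j).card : ℝ) else 0 := by
    intro i
    rw [Finset.sum_div]
    have h1 : ∀ j ∈ eqClass E i, f j / ((eqClass E i).card : ℝ)
        = f j / ((eqClass E j).card : ℝ) := by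
      intro j hj
      rw [mem_eqClass_iff] at hj
      rw [eqClass_eq_of_eq hj.1 hj.2]
    rw [Finset.sum_congr rfl h1]
    rw [← Finset.univ_inter (eqClass E i), ← Finset.sum_ite_mem]
    refine Finset.sum_congr rfl fun j _ => ?_
    have : j ∈ eqClass E i ↔ i ∈ eqClass E j := by
      rw [mem_eqClass_iff, mem_eqClass_iff]
      constructor <;> exact fun ⟨a, b⟩ => ⟨a.symm, b.symm⟩
    simp [this]
  simp_rw [step1]
  rw [Finset.sum_comm]
  refine Finset.sum_congr rfl fun j _ => ?_
  rw [Finset.sum_ite_mem, Finset.univ_inter, Finset.sum_const,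
    nsmul_eq_mul, mul_div_cancel₀]
  exact ne_of_gt (eqClass_card_pos E j)

lemma Xeps_eq_of_eq {E : Economy n} {i j : Fin n}
    (h1 : E.endow j = E.endow i) (h2 : E.pref j = E.pref i) (ε : ℝ) :
    Xeps E j ε = Xeps E i ε := by
  unfold Xeps; rw [h1, h2]

end AuxAvg

/-- averaging an equilibrium allocation over classes of identical agents
(equal endowments and preferences, hence equal utilities) yields another Walrasian
equilibrium with slack whose allocation satisfies equal treatment of equals. -/
theorem average_we_slack {n : ℕ} (E : Economy n) (u : Fin n → Fin n → ℝ)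
    (hu : Consistent E u)
    (huEq : ∀ i j, E.endow i = E.endow j → E.pref i = E.pref j → u i = u j)
    (ε : ℝ) (hε : 0 < ε) (x : Fin n → Fin n → ℝ) (P : Fin n → ℝ) (α : ℝ)
    (hwe : WEslack E u ε x P α) :
    WEslack E u ε (fun i o => (∑ j ∈ eqClass E i, x j o) / (eqClass E i).card) P α ∧
    ETE E (fun i o => (∑ j ∈ eqClass E i, x j o) / (eqClass E i).card) := by
  obtain ⟨hP, hPsum, hα, hclear, hopt⟩ := hwe
  constructor
  · refine ⟨hP, hPsum, hα, ?_, ?_⟩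
    · intro o
      rw [show (∑ i, (∑ j ∈ eqClass E i, x j o) / ((eqClass E i).card : ℝ))
          = ∑ j, x j o from sum_avg E (fun j => x j o)]
      exact hclear o
    · intro i
      set s := eqClass E i with hs
      have hc : (0 : ℝ) < (s.card : ℝ) := eqClass_card_pos E i
      have hmem : ∀ j ∈ s, E.endow j = E.endow i ∧ E.pref j = E.pref i := by
        intro j hj; exact mem_eqClass_iff.mp hj
      have huj : ∀ j ∈ s, u j = u i := fun j hj =>
        huEq j i (hmem j hj).1 (hmem j hj).2
      refine ⟨⟨?_, ?_, ?_⟩, ?_, ?_⟩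
      · intro o
        constructor
        · exact div_nonneg (Finset.sum_nonneg fun j _ => ((hopt j).1.1 o).1) hc.le
        · rw [div_le_one hc]
          calc ∑ j ∈ s, x j o ≤ ∑ j ∈ s, 1 :=
                Finset.sum_le_sum fun j _ => ((hopt j).1.1 o).2
            _ = (s.card : ℝ) := by rw [Finset.sum_const, nsmul_eq_mul, mul_one]
      · have := lin_avg (fun _ => (1:ℝ)) s x (s.card : ℝ)
        simp only [one_mul] at this
        rw [this, div_le_one hc]
        calc ∑ j ∈ s, ∑ o, x j o ≤ ∑ j ∈ s, 1 :=
              Finset.sum_le_sum fun j _ => (hopt j).1.2.1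
          _ = (s.card : ℝ) := by rw [Finset.sum_const, nsmul_eq_mul, mul_one]
      · intro o
        rw [upperSum_avg, le_div_iff₀ hc]
        calc (upperSum (E.pref i) (E.endow i) o - ε) * (s.card : ℝ)
            = ∑ j ∈ s, (upperSum (E.pref i) (E.endow i) o - ε) := by
              rw [Finset.sum_const, nsmul_eq_mul, mul_comm]
          _ ≤ ∑ j ∈ s, upperSum (E.pref i) (x j) o := by
              refine Finset.sum_le_sum fun j hj => ?_
              have h := (hopt j).1.2.2 o
              rw [(hmem j hj).1, (hmem j hj).2] at h
              exact h
      · rw [lin_avg P s x (s.card : ℝ), div_le_iff₀ hc]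
        calc ∑ j ∈ s, ∑ o, P o * x j o
            ≤ ∑ j ∈ s, (∑ o, P o * E.endow i o + α) := by
              refine Finset.sum_le_sum fun j hj => ?_
              have h := (hopt j).2.1
              rw [(hmem j hj).1] at h
              exact h
          _ = (∑ o, P o * E.endow i o + α) * (s.card : ℝ) := by
              rw [Finset.sum_const, nsmul_eq_mul, mul_comm]
      · intro z hz hbz
        have key : ∀ j ∈ s, expUtil (u i) z ≤ expUtil (u i) (x j) := by
          intro j hj
          rw [← huj j hj]
          refine (hopt j).2.2 z ?_ ?_
          · rw [Xeps_eq_of_eq (hmem j hj).1 (hmem j hj).2]; exact hz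
          · rw [(hmem j hj).1]; exact hbz
        show expUtil (u i) z ≤ expUtil (u i) (fun o => (∑ j ∈ s, x j o) / (s.card : ℝ))
        unfold expUtil
        rw [lin_avg (u i) s x (s.card : ℝ), le_div_iff₀ hc]
        calc expUtil (u i) z * (s.card : ℝ) = ∑ j ∈ s, expUtil (u i) z := by
              rw [Finset.sum_const, nsmul_eq_mul, mul_comm]
          _ ≤ ∑ j ∈ s, ∑ o, u i o * x j o := Finset.sum_le_sum fun j hj => key j hj
  · intro i j h1 h2
    have heq : eqClass E i = eqClass E j := eqClass_eq_of_eq h1 h2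
    funext o
    simp only [heq]
end

section
/- Fix an economy and a profile of consistent vNM utilities. Let (ε^k)_{k∈ℕ} be a sequence of positive reals with ε^k → 0, and for each k let (x^k, P^k, α^k) be a Walrasian equilibrium with slack for parameter ε^k such that the allocation x^k satisfies equal treatment of equals. Then any limit point x* of the sequence (x^k)_{k∈ℕ} is an allocation that satisfies equal treatment of equals, is individually rational, and belongs to the weak core (i.e., is not strongly blocked by any non-singleton coalition). -/
open Finset

noncomputable def lowVal {n : ℕ} (v : Fin n → ℝ) (o : Fin n) : ℝ :=
  if h : (Finset.univ.filter (fun o' => v o' < v o)).Nonempty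
  then ((Finset.univ.filter (fun o' => v o' < v o)).image v).max' (h.image v) else 0

noncomputable def gap {n : ℕ} (v : Fin n → ℝ) (o : Fin n) : ℝ := v o - lowVal v o

lemma gap_nonneg {n : ℕ} (v : Fin n → ℝ) (hnn : ∀ o, 0 ≤ v o) (o : Fin n) : 0 ≤ gap v o := by
  unfold gap lowVal
  split_ifs with h
  · have hmem := Finset.max'_mem _ (h.image v)
    obtain ⟨o₁, ho₁, heq⟩ := Finset.mem_image.1 hmem
    rw [← heq]
    have := (Finset.mem_filter.1 ho₁).2
    linarith
  · linarith [hnn o]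

lemma gap_pos {n : ℕ} (v : Fin n → ℝ) {o : Fin n}
    (h : (Finset.univ.filter (fun o' => v o' < v o)).Nonempty) : 0 < gap v o := by
  unfold gap lowVal
  rw [dif_pos h]
  have hmem := Finset.max'_mem _ (h.image v)
  obtain ⟨o₁, ho₁, heq⟩ := Finset.mem_image.1 hmem
  rw [← heq]
  have := (Finset.mem_filter.1 ho₁).2
  linarith

lemma tele {n : ℕ} (v : Fin n → ℝ) (hinj : Function.Injective v) (hnn : ∀ o, 0 ≤ v o) :
    ∀ (m : ℕ) (o : Fin n), (Finset.univ.filter (fun o' => v o' < v o)).card = m →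
      ∑ o' ∈ Finset.univ.filter (fun o' => v o' ≤ v o), gap v o' = v o := by
  intro m
  induction m using Nat.strong_induction_on with
  | _ m ih =>
    intro o hm
    by_cases hne : (Finset.univ.filter (fun o' => v o' < v o)).Nonempty
    · -- find o₁ realizing the max
      have hmem := Finset.max'_mem _ (hne.image v)
      obtain ⟨o₁, ho₁, heq⟩ := Finset.mem_image.1 hmem
      have ho₁lt : v o₁ < v o := (Finset.mem_filter.1 ho₁).2
      have hmax : ∀ o', v o' < v o → v o' ≤ v o₁ := by
        intro o' h'
        rw [heq]
        exact Finset.le_max' _ _ (Finset.mem_image.2 ⟨o', Finset.mem_filter.2 ⟨Finset.mem_univ _, h'⟩, rfl⟩)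
      have hset : Finset.univ.filter (fun o' => v o' ≤ v o)
          = insert o (Finset.univ.filter (fun o' => v o' ≤ v o₁)) := by
        ext o'
        simp only [Finset.mem_filter, Finset.mem_univ, true_and, Finset.mem_insert]
        constructor
        · intro h'
          rcases eq_or_lt_of_le h' with h'' | h''
          · exact Or.inl (hinj h'')
          · exact Or.inr (hmax _ h'')
        · rintro (rfl | h')
          · exact le_rfl
          · linarith
      have hnotmem : o ∉ Finset.univ.filter (fun o' => v o' ≤ v o₁) := by
        simp only [Finset.mem_filter, Finset.mem_univ, true_and]
        linarith
      have hcard : (Finset.univ.filter (fun o' => v o' < v o₁)).card < m := by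
        rw [← hm]
        apply Finset.card_lt_card
        constructor
        · intro o' h'
          simp only [Finset.mem_filter, Finset.mem_univ, true_and] at h' ⊢
          linarith
        · intro hsub
          have := hsub (Finset.mem_filter.2 ⟨Finset.mem_univ o₁, ho₁lt⟩)
          simp only [Finset.mem_filter, Finset.mem_univ, true_and] at this
          exact lt_irrefl _ this
      have hih := ih _ hcard o₁ rfl
      rw [hset, Finset.sum_insert hnotmem, hih]
      have hgap : gap v o = v o - v o₁ := by
        unfold gap lowVal
        rw [dif_pos hne, ← heq]
      rw [hgap]; ring
    · have hset : Finset.univ.filter (fun o' => v o' ≤ v o) = {o} := by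
        ext o'
        simp only [Finset.mem_filter, Finset.mem_univ, true_and, Finset.mem_singleton]
        constructor
        · intro h'
          rcases eq_or_lt_of_le h' with h'' | h''
          · exact hinj h''
          · exact absurd ⟨o', Finset.mem_filter.2 ⟨Finset.mem_univ _, h''⟩⟩ hne
        · rintro rfl; exact le_rfl
      rw [hset, Finset.sum_singleton]
      unfold gap lowVal
      rw [dif_neg hne]; ring

lemma exp_eq {n : ℕ} (v : Fin n → ℝ) (hinj : Function.Injective v) (hnn : ∀ o, 0 ≤ v o)
    (x : Fin n → ℝ) :
    ∑ o, v o * x o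
      = ∑ o, gap v o * ∑ o' ∈ Finset.univ.filter (fun o' => v o ≤ v o'), x o' := by
  have : ∀ o : Fin n, gap v o * ∑ o' ∈ Finset.univ.filter (fun o' => v o ≤ v o'), x o'
      = ∑ o' : Fin n, if v o ≤ v o' then gap v o * x o' else 0 := by
    intro o
    rw [Finset.mul_sum, Finset.sum_filter]
  simp_rw [this]
  rw [Finset.sum_comm]
  apply Finset.sum_congr rfl
  intro o' _
  have : ∑ o : Fin n, (if v o ≤ v o' then gap v o * x o' else 0)
      = (∑ o ∈ Finset.univ.filter (fun o => v o ≤ v o'), gap v o) * x o' := by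
    rw [Finset.sum_mul, Finset.sum_filter]
  rw [this, tele v hinj hnn _ o' rfl]

lemma exp_lt {n : ℕ} (v : Fin n → ℝ) (hinj : Function.Injective v) (hnn : ∀ o, 0 ≤ v o)
    (p q : Fin n → ℝ) (hsum : ∑ o, q o = ∑ o, p o)
    (hdom : ∀ o, ∑ o' ∈ Finset.univ.filter (fun o' => v o ≤ v o'), q o'
      ≤ ∑ o' ∈ Finset.univ.filter (fun o' => v o ≤ v o'), p o')
    (o₀ : Fin n)
    (hst : ∑ o' ∈ Finset.univ.filter (fun o' => v o₀ ≤ v o'), q o'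
      < ∑ o' ∈ Finset.univ.filter (fun o' => v o₀ ≤ v o'), p o') :
    ∑ o, v o * q o < ∑ o, v o * p o := by
  rw [exp_eq v hinj hnn, exp_eq v hinj hnn]
  apply Finset.sum_lt_sum
  · intro o _
    exact mul_le_mul_of_nonneg_left (hdom o) (gap_nonneg v hnn o)
  · refine ⟨o₀, Finset.mem_univ _, ?_⟩
    have hne : (Finset.univ.filter (fun o' => v o' < v o₀)).Nonempty := by
      by_contra h
      have hall : ∀ o', v o₀ ≤ v o' := by
        intro o'
        by_contra h'
        exact h ⟨o', Finset.mem_filter.2 ⟨Finset.mem_univ _, lt_of_not_ge h'⟩⟩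
      have : Finset.univ.filter (fun o' => v o₀ ≤ v o') = Finset.univ := by
        apply Finset.filter_true_of_mem
        intro o' _; exact hall o'
      rw [this] at hst
      rw [hsum] at hst
      exact lt_irrefl _ hst
    exact mul_lt_mul_of_pos_left hst (gap_pos v hne)

/-- any limit point of a sequence of ETE Walrasian-equilibrium-with-slack
allocations, as the slack parameters ε^k tend to 0, is an allocation satisfying ETE,
individual rationality, and weak core membership. -/
theorem limit_point_in_weak_core {n : ℕ} (E : Economy n) (u : Fin n → Fin n → ℝ)
    (hu : Consistent E u) (ε : ℕ → ℝ) (hεpos : ∀ k, 0 < ε k)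
    (hε0 : Filter.Tendsto ε Filter.atTop (nhds 0))
    (x : ℕ → Fin n → Fin n → ℝ) (P : ℕ → Fin n → ℝ) (α : ℕ → ℝ)
    (hwe : ∀ k, WEslack E u (ε k) (x k) (P k) (α k))
    (hETE : ∀ k, ETE E (x k))
    (xstar : Fin n → Fin n → ℝ) (φ : ℕ → ℕ) (hφ : StrictMono φ)
    (hlim : Filter.Tendsto (fun k => x (φ k)) Filter.atTop (nhds xstar)) :
    IsAllocation xstar ∧ ETE E xstar ∧ IR E xstar ∧ InWeakCore E xstar := by
  classical
  have hcoord : ∀ i o, Filter.Tendsto (fun k => x (φ k) i o) Filter.atTop (nhds (xstar i o)) := by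
    intro i o
    exact (tendsto_pi_nhds.1 ((tendsto_pi_nhds.1 hlim) i)) o
  have hεφ : Filter.Tendsto (fun k => ε (φ k)) Filter.atTop (nhds 0) :=
    hε0.comp hφ.tendsto_atTop
  have hinj : ∀ i, Function.Injective (u i) := by
    intro i a b hab
    by_contra hne
    rcases E.pref_total i a b hne with h | h
    · have := (hu.2 i a b).1 h
      linarith [hab.ge]
    · have := (hu.2 i b a).1 h
      linarith [hab.le]
  have hUS : ∀ i (y : Fin n → ℝ) o, upperSum (E.pref i) y o
      = ∑ o' ∈ Finset.univ.filter (fun o' => u i o ≤ u i o'), y o' := by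
    intro i y o
    unfold upperSum
    rw [Finset.sum_filter]
    apply Finset.sum_congr rfl
    intro o' _
    have hiff : (E.pref i o' o ∨ o' = o) ↔ (u i o ≤ u i o') := by
      constructor
      · rintro (h | rfl)
        · exact le_of_lt ((hu.2 i o' o).1 h)
        · exact le_rfl
      · intro h
        by_cases he : o' = o
        · exact Or.inr he
        · rcases E.pref_total i o' o he with hp | hp
          · exact Or.inl hp
          · exact absurd h (not_le.2 ((hu.2 i o o').1 hp))
    exact if_congr hiff rfl rfl
  have hUStend : ∀ i o, Filter.Tendsto (fun k => upperSum (E.pref i) (x (φ k) i) o)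
      Filter.atTop (nhds (upperSum (E.pref i) (xstar i) o)) := by
    intro i o
    unfold upperSum
    apply tendsto_finset_sum
    intro o' _
    by_cases h : E.pref i o' o ∨ o' = o
    · simpa only [if_pos h] using hcoord i o'
    · simpa only [if_neg h] using (tendsto_const_nhds : Filter.Tendsto (fun _ : ℕ => (0:ℝ)) _ _)
  have Hrow1 : ∀ k i, ∑ o, x k i o = 1 := by
    intro k i
    have htot : ∑ j, ∑ o, x k j o = (n : ℝ) := by
      rw [Finset.sum_comm]
      calc ∑ o : Fin n, ∑ j, x k j o = ∑ o : Fin n, ∑ j, E.endow j o :=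
            Finset.sum_congr rfl fun o _ => (hwe k).2.2.2.1 o
        _ = ∑ _o : Fin n, (1:ℝ) := Finset.sum_congr rfl fun o _ => E.endow_col o
        _ = (n : ℝ) := by simp
    by_contra hne
    have hlt : ∑ o, x k i o < 1 := lt_of_le_of_ne ((hwe k).2.2.2.2 i).1.2.1 hne
    have hslt : ∑ j, ∑ o, x k j o < ∑ _j : Fin n, (1:ℝ) := by
      apply Finset.sum_lt_sum
      · intro j _; exact ((hwe k).2.2.2.2 j).1.2.1
      · exact ⟨i, Finset.mem_univ i, hlt⟩
    rw [htot] at hslt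
    simp at hslt
  have hallocx : IsAllocation xstar := by
    refine ⟨fun i o => ⟨?_, ?_⟩, fun i => ?_, fun o => ?_⟩
    · exact ge_of_tendsto' (hcoord i o) (fun k => (((hwe (φ k)).2.2.2.2 i).1.1 o).1)
    · exact le_of_tendsto' (hcoord i o) (fun k => (((hwe (φ k)).2.2.2.2 i).1.1 o).2)
    · have h1 : Filter.Tendsto (fun k => ∑ o, x (φ k) i o) Filter.atTop (nhds (∑ o, xstar i o)) :=
        tendsto_finset_sum _ (fun o _ => hcoord i o)
      have h2 : (fun k => ∑ o, x (φ k) i o) = fun _ => (1:ℝ) := funext fun k => Hrow1 (φ k) i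
      rw [h2] at h1
      exact tendsto_nhds_unique h1 tendsto_const_nhds
    · have h1 : Filter.Tendsto (fun k => ∑ i, x (φ k) i o) Filter.atTop (nhds (∑ i, xstar i o)) :=
        tendsto_finset_sum _ (fun i _ => hcoord i o)
      have h2 : (fun k => ∑ i, x (φ k) i o) = fun _ => (1:ℝ) := by
        funext k; rw [(hwe (φ k)).2.2.2.1 o, E.endow_col o]
      rw [h2] at h1
      exact tendsto_nhds_unique h1 tendsto_const_nhds
  have hETEstar : ETE E xstar := by
    intro i j he hp
    funext o
    have h1 := hcoord i o
    have h2 := hcoord j o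
    have heqf : (fun k => x (φ k) i o) = fun k => x (φ k) j o := by
      funext k; rw [hETE (φ k) i j he hp]
    rw [heqf] at h1
    exact tendsto_nhds_unique h1 h2
  have hIRstar : IR E xstar := by
    intro i o
    have hle : ∀ k, upperSum (E.pref i) (E.endow i) o - ε (φ k)
        ≤ upperSum (E.pref i) (x (φ k) i) o := fun k => ((hwe (φ k)).2.2.2.2 i).1.2.2 o
    have hL : Filter.Tendsto (fun k => upperSum (E.pref i) (E.endow i) o - ε (φ k))
        Filter.atTop (nhds (upperSum (E.pref i) (E.endow i) o - 0)) :=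
      tendsto_const_nhds.sub hεφ
    rw [sub_zero] at hL
    exact le_of_tendsto_of_tendsto' hL (hUStend i o) hle
  refine ⟨hallocx, hETEstar, hIRstar, hallocx, hIRstar, ?_⟩
  rintro ⟨I', p', hcard, hallocp', hfeas, hblock⟩
  have hne : I'.Nonempty := Finset.card_pos.1 (by omega)
  have hexp : ∀ i ∈ I', expUtil (u i) (xstar i) < expUtil (u i) (p' i) := by
    intro i hi
    obtain ⟨hdom, o₀, hst⟩ := hblock i hi
    have hlt := exp_lt (u i) (hinj i) (hu.1 i) (p' i) (xstar i)
      (by rw [hallocx.2.1 i, hallocp'.2.1 i])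
      (fun o => by rw [← hUS i (xstar i) o, ← hUS i (p' i) o]; exact hdom o)
      o₀ (by rw [← hUS i (xstar i) o₀, ← hUS i (p' i) o₀]; exact hst)
    simpa only [expUtil] using hlt
  have hXp' : ∀ i ∈ I', ∀ k, p' i ∈ Xeps E i (ε k) := by
    intro i hi k
    refine ⟨fun o => hallocp'.1 i o, le_of_eq (hallocp'.2.1 i), fun o => ?_⟩
    have h1 := hIRstar i o
    have h2 := (hblock i hi).1 o
    have h3 := hεpos k
    linarith
  have hviol : ∀ᶠ k in Filter.atTop, ∀ i ∈ I',
      ¬ (∑ o, P (φ k) o * p' i o ≤ ∑ o, P (φ k) o * E.endow i o + α (φ k)) := by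
    rw [Filter.eventually_all_finset]
    intro i hi
    have htendU : Filter.Tendsto (fun k => expUtil (u i) (x (φ k) i)) Filter.atTop
        (nhds (expUtil (u i) (xstar i))) := by
      unfold expUtil
      exact tendsto_finset_sum _ fun o _ => tendsto_const_nhds.mul (hcoord i o)
    have hev := htendU.eventually_lt_const (hexp i hi)
    filter_upwards [hev] with k hk hbud
    have := ((hwe (φ k)).2.2.2.2 i).2.2 (p' i) (hXp' i hi (φ k)) hbud
    linarith
  obtain ⟨k, hk⟩ := hviol.exists
  set m := φ k with hm
  have hα := (hwe m).2.2.1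
  have hlt : ∀ i ∈ I', ∑ o, P m o * E.endow i o + α m < ∑ o, P m o * p' i o :=
    fun i hi => lt_of_not_ge (hk i hi)
  have hsumlt := Finset.sum_lt_sum_of_nonempty hne hlt
  have heq : ∑ i ∈ I', ∑ o, P m o * p' i o = ∑ i ∈ I', ∑ o, P m o * E.endow i o := by
    calc ∑ i ∈ I', ∑ o, P m o * p' i o = ∑ o, ∑ i ∈ I', P m o * p' i o := Finset.sum_comm
      _ = ∑ o, P m o * ∑ i ∈ I', p' i o :=
          Finset.sum_congr rfl fun o _ => (Finset.mul_sum _ _ _).symm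
      _ = ∑ o, P m o * ∑ i ∈ I', E.endow i o :=
          Finset.sum_congr rfl fun o _ => by rw [hfeas o]
      _ = ∑ o, ∑ i ∈ I', P m o * E.endow i o :=
          Finset.sum_congr rfl fun o _ => Finset.mul_sum _ _ _
      _ = ∑ i ∈ I', ∑ o, P m o * E.endow i o := Finset.sum_comm
  have hsplit : ∑ i ∈ I', (∑ o, P m o * E.endow i o + α m)
      = ∑ i ∈ I', (∑ o, P m o * E.endow i o) + I'.card * α m := by
    rw [Finset.sum_add_distrib, Finset.sum_const, nsmul_eq_mul]
  have hcard0 : (0:ℝ) ≤ I'.card * α m := mul_nonneg (Nat.cast_nonneg _) hα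
  rw [hsplit, heq] at hsumlt
  linarith
end

section
/- If (x, P, α) is a Walrasian equilibrium with slack for parameter ε > 0 with a blocking candidate: i.e., suppose a non-singleton coalition I' and an allocation x' satisfy Σ_{i∈I'} x'_i = Σ_{i∈I'} ω_i, x'_i ∈ X^ε_i for all i ∈ I', and u_i(x'_i) > u_i(x_i) for all i ∈ I'. Then this situation is impossible: no such coalition and allocation exist, since for each i ∈ I' one would need P · x'_i > P · ω_i + α ≥ P · ω_i, contradicting Σ_{i∈I'} x'_i = Σ_{i∈I'} ω_i. -/
open Finset

/-- no non-singleton coalition can reallocate its endowments within the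
consumption spaces so that every member gets strictly higher expected utility than at a
Walrasian equilibrium with slack. -/
theorem we_slack_not_blocked {n : ℕ} (E : Economy n) (u : Fin n → Fin n → ℝ)
    (hu : Consistent E u) (ε : ℝ) (hε : 0 < ε)
    (x : Fin n → Fin n → ℝ) (P : Fin n → ℝ) (α : ℝ) (hwe : WEslack E u ε x P α)
    (I' : Finset (Fin n)) (hI' : 1 < I'.card) (x' : Fin n → Fin n → ℝ)
    (hfeas : ∀ o, ∑ i ∈ I', x' i o = ∑ i ∈ I', E.endow i o)
    (hmem : ∀ i ∈ I', x' i ∈ Xeps E i ε)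
    (hbetter : ∀ i ∈ I', expUtil (u i) (x i) < expUtil (u i) (x' i)) :
    False := by
  obtain ⟨hP, hPsum, hα, hclear, hmax⟩ := hwe
  -- each blocking member must violate the budget
  have hbudget : ∀ i ∈ I', ∑ o, P o * E.endow i o + α < ∑ o, P o * x' i o := by
    intro i hi
    by_contra h
    push_neg at h
    exact absurd ((hmax i).2.2 (x' i) (hmem i hi) h) (not_le.mpr (hbetter i hi))
  have hne : I'.Nonempty := Finset.card_pos.mp (by omega)
  have hsum : ∑ i ∈ I', (∑ o, P o * E.endow i o + α) < ∑ i ∈ I', ∑ o, P o * x' i o :=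
    Finset.sum_lt_sum_of_nonempty hne hbudget
  have heq : ∑ i ∈ I', ∑ o, P o * x' i o = ∑ i ∈ I', ∑ o, P o * E.endow i o := by
    rw [Finset.sum_comm, Finset.sum_comm (s := I')]
    refine Finset.sum_congr rfl fun o _ => ?_
    rw [← Finset.mul_sum, ← Finset.mul_sum, hfeas o]
  have : ∑ i ∈ I', ∑ o, P o * E.endow i o ≤ ∑ i ∈ I', (∑ o, P o * E.endow i o + α) := by
    apply Finset.sum_le_sum
    intro i _
    linarith
  linarith
end
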